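/- Let ψ be a quantifier-free SO₂ formula over function symbols F, and let ψ^BV be the bit-vector term of width 1 obtained by the inductive translation: (ρ₁ ∧ ρ₂)^BV = ρ₁^BV & ρ₂^BV; (¬ρ)^BV = ~ρ^BV; f()^BV = x_f (a width-1 variable) for a proposition f; and f(ρ_{n-1},…,ρ_0)^BV = x_f[0^{2^n−n} · ρ_{n-1}^BV · … · ρ_0^BV] for a proper function symbol f of arity n, where x_f is a variable of width 2^n and · denotes concatenation. Then for every F-interpretation I, evaluating ψ^BV under the bit-vector assignment that maps each variable x_f to the encoding of the Boolean function I(f) yields the width-1 bit-vector whose single bit equals the valuation ⟦ψ⟧_I. -/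

import Mathlib

/-! Quantifier-free second-order Boolean (SO₂) formulas over a set `F` of
function symbols with arities `ar`, their Boolean valuation, bit-vector
terms over variables `x_f` of widths `w f`, and the translation `ψ ↦ ψ^BV`. -/

/-- Quantifier-free SO₂ formulas: conjunction, negation, and application of a
function symbol `f` to `ar f` arguments (argument `i` of `app f args` is the
one whose value becomes bit `i` of the index, i.e. `args ⟨n-1⟩, …, args ⟨0⟩`
are `ρ_{n-1}, …, ρ_0`). -/
inductive SO2QF (F : Type) (ar : F → ℕ) : Type
  | and : SO2QF F ar → SO2QF F ar → SO2QF F ar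
  | not : SO2QF F ar → SO2QF F ar
  | app : (f : F) → (Fin (ar f) → SO2QF F ar) → SO2QF F ar

/-- The valuation `⟦ψ⟧_I ∈ {0,1}` (as a `Bool`) of a quantifier-free SO₂
formula under an `F`-interpretation `I`. -/
def SO2QF.eval {F : Type} {ar : F → ℕ}
    (I : (f : F) → (Fin (ar f) → Bool) → Bool) : SO2QF F ar → Bool
  | .and φ ψ => φ.eval I && ψ.eval I
  | .not φ => ! φ.eval I
  | .app f args => I f (fun i => (args i).eval I)

/-- Bit-vector terms of a given width over variables `v : V` of widths `w v`:
variables, bitwise and `&`, bitwise negation `~`, zero constants `0^k`,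
concatenation `·` (left argument most significant), the generalized indexing
operation `t[s]`, and a cast along an equality of widths. -/
inductive BVTerm (V : Type) (w : V → ℕ) : ℕ → Type
  | var : (v : V) → BVTerm V w (w v)
  | band : {m : ℕ} → BVTerm V w m → BVTerm V w m → BVTerm V w m
  | bnot : {m : ℕ} → BVTerm V w m → BVTerm V w m
  | zero : (k : ℕ) → BVTerm V w k
  | append : {m k : ℕ} → BVTerm V w m → BVTerm V w k → BVTerm V w (m + k)
  | index : {m : ℕ} → BVTerm V w m → BVTerm V w m → BVTerm V w 1
  | cast : {m k : ℕ} → m = k → BVTerm V w m → BVTerm V w k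

/-- Evaluation of a bit-vector term under an assignment `σ` of bit-vector
values to the variables.  The generalized indexing `t[s]` evaluates to the
least significant bit of the logical right-shift of `t` by the numeric value
of `s`, as a bit-vector of width 1. -/
def BVTerm.eval {V : Type} {w : V → ℕ} (σ : (v : V) → BitVec (w v)) :
    {m : ℕ} → BVTerm V w m → BitVec m
  | _, .var v => σ v
  | _, .band t₁ t₂ => t₁.eval σ &&& t₂.eval σ
  | _, .bnot t => ~~~ (t.eval σ)
  | _, .zero _ => 0
  | _, .append t₁ t₂ => t₁.eval σ ++ t₂.eval σ
  | _, .index t s => BitVec.ofBool ((t.eval σ >>> (s.eval σ).toNat).getLsbD 0)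
  | _, .cast h t => BitVec.cast h (t.eval σ)

/-- The chain `ρ_{n-1}^BV · ρ_{n-2}^BV · … · ρ_0^BV` of width-1 terms,
concatenated into a term of width `n` (term `i` contributing bit `i`). -/
def chainBV {V : Type} {w : V → ℕ} :
    {n : ℕ} → (Fin n → BVTerm V w 1) → BVTerm V w n
  | 0, _ => .zero 0
  | n + 1, f =>
      .cast (Nat.add_comm 1 n)
        (.append (f ⟨n, n.lt_succ_self⟩) (chainBV (fun i => f i.castSucc)))

/-- The translation `ψ ↦ ψ^BV` of a quantifier-free SO₂ formula to a
bit-vector term of width 1 over the variables `x_f` of widths `2^(ar f)`: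
`(ρ₁ ∧ ρ₂)^BV = ρ₁^BV & ρ₂^BV`, `(¬ρ)^BV = ~ρ^BV`, `f()^BV = x_f` for a
proposition `f`, and
`f(ρ_{n-1},…,ρ_0)^BV = x_f[0^{2^n−n} · ρ_{n-1}^BV · … · ρ_0^BV]` for a proper
function symbol `f` of arity `n`. -/
def transQF {F : Type} {ar : F → ℕ} :
    SO2QF F ar → BVTerm F (fun f => 2 ^ ar f) 1
  | .and ρ₁ ρ₂ => .band (transQF ρ₁) (transQF ρ₂)
  | .not ρ => .bnot (transQF ρ)
  | .app f args =>
      if h : ar f = 0 then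
        .cast (by rw [h, pow_zero]) (.var f)
      else
        .index (.var f)
          (.cast (Nat.sub_add_cancel (Nat.le_of_lt (Nat.lt_two_pow_self (n := ar f))))
            (.append (.zero (2 ^ ar f - ar f))
              (chainBV (fun i => transQF (args i)))))

/-- The encoding of an `n`-ary Boolean function `G` as the bit-vector of width
`2^n` whose bit at index `∑_{i<n} 2^i·b_i` equals `G (b_{n-1}, …, b_0)`. -/
def encodeBF {n : ℕ} (G : (Fin n → Bool) → Bool) : BitVec (2 ^ n) :=
  BitVec.ofNat (2 ^ n)
    (∑ b : Fin n → Bool, (G b).toNat * 2 ^ (∑ i : Fin n, 2 ^ (i : ℕ) * (b i).toNat))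


section AuxLemmas

theorem digitSum_spec (m : ℕ) (d : ℕ → Bool) :
    (∑ k ∈ Finset.range m, (d k).toNat * 2 ^ k) < 2 ^ m ∧
    ∀ j < m, (∑ k ∈ Finset.range m, (d k).toNat * 2 ^ k).testBit j = d j := by
  induction m with
  | zero => simp
  | succ m ih =>
    obtain ⟨hlt, hbit⟩ := ih
    have hrw : (∑ k ∈ Finset.range (m+1), (d k).toNat * 2 ^ k)
        = 2 ^ m * (d m).toNat + ∑ k ∈ Finset.range m, (d k).toNat * 2 ^ k := by
      rw [Finset.sum_range_succ]; ring
    constructor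
    · have : (d m).toNat ≤ 1 := Bool.toNat_le (d m)
      rw [hrw, pow_succ]
      have h0 : 0 < 2^m := Nat.pow_pos (by norm_num)
      nlinarith
    · intro j hj
      rw [hrw, Nat.testBit_two_pow_mul_add _ hlt]
      rcases Nat.lt_succ_iff_lt_or_eq.mp hj with hj | rfl
      · simp [hj, hbit j hj]
      · simp only [Nat.lt_irrefl, if_neg (lt_irrefl j), Nat.sub_self]
        cases d j <;> simp

noncomputable def boolFunEquiv (n : ℕ) : (Fin n → Bool) ≃ Fin (2 ^ n) :=
  (Equiv.arrowCongr (Equiv.refl _) finTwoEquiv.symm).trans finFunctionFinEquiv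

theorem boolFunEquiv_val {n : ℕ} (b : Fin n → Bool) :
    ((boolFunEquiv n b : Fin (2^n)) : ℕ) = ∑ i : Fin n, 2 ^ (i : ℕ) * (b i).toNat := by
  simp only [boolFunEquiv, Equiv.trans_apply, finFunctionFinEquiv_apply]
  refine Finset.sum_congr rfl fun i _ => ?_
  simp only [Equiv.arrowCongr_apply, Equiv.refl_symm, Function.comp, Equiv.refl_apply]
  rw [mul_comm]
  congr 1
  cases b i <;> rfl

theorem chainBV_toNat {V : Type} {w : V → ℕ} (σ : (v : V) → BitVec (w v)) :
    ∀ {n : ℕ} (f : Fin n → BVTerm V w 1),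
      ((chainBV f).eval σ).toNat = ∑ i : Fin n, 2 ^ (i : ℕ) * ((f i).eval σ).toNat := by
  intro n
  induction n with
  | zero => intro f; simp [chainBV, BVTerm.eval]
  | succ n ih =>
    intro f
    have hlt : ((chainBV fun i => f i.castSucc).eval σ).toNat < 2 ^ n :=
      ((chainBV fun i => f i.castSucc).eval σ).isLt
    simp only [chainBV, BVTerm.eval, BitVec.toNat_cast, BitVec.toNat_append]
    rw [Nat.shiftLeft_eq, mul_comm, ← Nat.two_pow_add_eq_or_of_lt hlt, ih,
      Fin.sum_univ_castSucc]
    simp only [Fin.coe_castSucc, Fin.val_last, Fin.last]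
    ring

theorem encodeBF_getLsbD {n : ℕ} (G : (Fin n → Bool) → Bool) (b : Fin n → Bool) :
    (encodeBF G).getLsbD (∑ i : Fin n, 2 ^ (i : ℕ) * (b i).toNat) = G b := by
  classical
  set e := boolFunEquiv n
  set d : ℕ → Bool := fun k => if h : k < 2 ^ n then G (e.symm ⟨k, h⟩) else false with hd
  have hsum : (∑ c : Fin n → Bool, (G c).toNat * 2 ^ (∑ i : Fin n, 2 ^ (i : ℕ) * (c i).toNat))
      = ∑ k ∈ Finset.range (2 ^ n), (d k).toNat * 2 ^ k := by
    rw [← Fin.sum_univ_eq_sum_range (fun k => (d k).toNat * 2 ^ k)]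
    refine Fintype.sum_equiv e _ _ fun c => ?_
    rw [← boolFunEquiv_val c]
    congr 1
    simp [hd, (e c).isLt, Fin.eta]
  obtain ⟨hlt, hbit⟩ := digitSum_spec (2 ^ n) d
  have hidx : (∑ i : Fin n, 2 ^ (i : ℕ) * (b i).toNat) = ((e b : Fin (2^n)) : ℕ) :=
    (boolFunEquiv_val b).symm
  unfold encodeBF
  rw [hsum, BitVec.getLsbD, BitVec.toNat_ofNat, Nat.testBit_mod_two_pow]
  rw [hidx]
  simp only [(e b).isLt, decide_true, Bool.true_and]
  rw [hbit _ (e b).isLt]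
  simp [hd, (e b).isLt, Fin.eta]

theorem cast_encodeBF_eq_ofBool {n : ℕ} (h : n = 0) (hw : 2 ^ n = 1)
    (G : (Fin n → Bool) → Bool) (b : Fin n → Bool) :
    BitVec.cast hw (encodeBF G) = BitVec.ofBool (G b) := by
  subst h
  haveI : Subsingleton (Fin 0 → Bool) := ⟨fun a c => funext fun i => i.elim0⟩
  unfold encodeBF
  rw [Fintype.sum_subsingleton _ b]
  apply BitVec.eq_of_toNat_eq
  simp only [BitVec.toNat_cast, BitVec.toNat_ofNat, BitVec.toNat_ofBool]
  cases G b <;> simp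

end AuxLemmas

/-- For every quantifier-free SO₂ formula `ψ` and every
`F`-interpretation `I`, evaluating the translated bit-vector term `ψ^BV` under
the assignment mapping each variable `x_f` to the encoding of the Boolean
function `I f` yields the width-1 bit-vector whose single bit is the
valuation `⟦ψ⟧_I`. -/
theorem transQF_eval {F : Type} {ar : F → ℕ} (ψ : SO2QF F ar)
    (I : (f : F) → (Fin (ar f) → Bool) → Bool) :
    (transQF ψ).eval (fun f => encodeBF (I f)) = BitVec.ofBool (ψ.eval I) := by
  induction ψ with
  | and φ ρ ih1 ih2 =>
    simp only [transQF, BVTerm.eval, SO2QF.eval, ih1, ih2]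
    cases φ.eval I <;> cases ρ.eval I <;> rfl
  | not φ ih =>
    simp only [transQF, BVTerm.eval, SO2QF.eval, ih]
    cases φ.eval I <;> rfl
  | app f args ih =>
    by_cases h : ar f = 0
    · simp only [transQF, dif_pos h, BVTerm.eval, SO2QF.eval]
      exact cast_encodeBF_eq_ofBool h _ (I f) _
    · simp only [transQF, dif_neg h, BVTerm.eval, SO2QF.eval]
      simp only [BVTerm.eval, BitVec.toNat_cast, BitVec.toNat_append,
        chainBV_toNat, ih, BitVec.toNat_ofBool, BitVec.toNat_ofNat,
        Nat.zero_mod, Nat.zero_shiftLeft, Nat.zero_or]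
      have h0 : ((0 : BitVec (2 ^ ar f - ar f))).toNat = 0 := by simp
      rw [h0, Nat.zero_shiftLeft, Nat.zero_or]
      congr 1
      rw [BitVec.getLsbD_ushiftRight, Nat.add_zero]
      exact encodeBF_getLsbD (I f) _
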